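/- arXiv:2504.16248 — 2 statements merged into one kernel-verified Lean document; each statement's English description precedes it below -/
import Mathlib

section
/- Let ξ = exp(2πi/3) and let L ⊂ ℂ² be the ℤ-span of λ₁ = (1,0), λ₂ = (ξ,0), λ₃ = (0,1), λ₄ = (0,ξ). The ℂ-linear map g(z₁,z₂) = (ξ·z₁, ξ⁻¹·z₂) maps L onto itself, and the induced map on the torus T = ℂ²/L has exactly nine fixed points: the set {z ∈ ℂ² : g(z) − z ∈ L} equals {(t₁·(ξ+2)/3, t₂·(ξ+2)/3) : t₁, t₂ ∈ ℤ} + L, and the nine classes of (t₁·(ξ+2)/3, t₂·(ξ+2)/3) modulo L for (t₁,t₂) ∈ {0,1,2}² are pairwise distinct. -/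
/-!
`L = Λ × Λ` for the Eisenstein lattice `Λ = ℤ + ℤξ`, which is a ring since `ξ² = -ξ - 1`;
hence `g` preserves `L`. A point `z` is fixed modulo `L` iff `(ξ - 1) z₁ ∈ Λ` and
`(ξ⁻¹ - 1) z₂ ∈ Λ`. With `c = (ξ + 2)/3` one has `(ξ - 1) c = -1` and `(ξ⁻¹ - 1) c = ξ²`, so
both conditions say `zᵢ ∈ cΛ = ℤc + Λ`. Finally `kc ∈ Λ` forces `3 ∣ k` because `1, ξ` are
linearly independent over `ℝ`.
-/

noncomputable section

open Complex

/-- `ξ = exp(2πi/3)`. -/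
def xi : ℂ := Complex.exp (2 * Real.pi * Complex.I / 3)

/-- The lattice `L = ℤλ₁ + ℤλ₂ + ℤλ₃ + ℤλ₄ ⊂ ℂ²` with
`λ₁ = (1,0)`, `λ₂ = (ξ,0)`, `λ₃ = (0,1)`, `λ₄ = (0,ξ)`. -/
def Ltorus : Submodule ℤ (ℂ × ℂ) :=
  Submodule.span ℤ {((1 : ℂ), (0 : ℂ)), (xi, 0), (0, 1), (0, xi)}

/-- The map `g(z₁,z₂) = (ξ·z₁, ξ⁻¹·z₂)`. -/
def gmap : ℂ × ℂ → ℂ × ℂ := fun z => (xi * z.1, xi⁻¹ * z.2)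

lemma xi_pow_three : xi ^ 3 = 1 := by
  rw [xi, ← Complex.exp_nat_mul]
  convert Complex.exp_two_pi_mul_I using 2
  push_cast; ring

lemma xi_ne_zero : xi ≠ 0 := fun h ↦ by simpa [h] using xi_pow_three

lemma zero_lt_xi_im : 0 < xi.im := by
  have h : xi = Complex.exp ((2 * Real.pi / 3 : ℝ) * Complex.I) := by
    rw [xi]; congr 1; push_cast; ring
  rw [h, Complex.exp_ofReal_mul_I_im]
  apply Real.sin_pos_of_pos_of_lt_pi <;> linarith [Real.pi_pos]

lemma xi_sq_add_xi_add_one : xi ^ 2 + xi + 1 = 0 := by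
  have hxi : xi - 1 ≠ 0 := fun h ↦ by
    simpa [sub_eq_zero.mp h] using zero_lt_xi_im
  exact (mul_eq_zero.mp (by linear_combination xi_pow_three :
    (xi - 1) * (xi ^ 2 + xi + 1) = 0)).resolve_left hxi

lemma xi_inv : xi⁻¹ = xi ^ 2 :=
  inv_eq_of_mul_eq_one_right (by linear_combination xi_pow_three)

lemma intCast_add_intCast_mul_xi_eq_zero {a b : ℤ} (h : (a : ℂ) + b * xi = 0) :
    a = 0 ∧ b = 0 := by
  have hb : b = 0 := by
    simpa [zero_lt_xi_im.ne'] using congrArg Complex.im h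
  subst hb
  exact ⟨by simpa using h, rfl⟩

def eisenstein : Submodule ℤ ℂ := Submodule.span ℤ {1, xi}

lemma mem_eisenstein_iff {w : ℂ} : w ∈ eisenstein ↔ ∃ a b : ℤ, (a : ℂ) + b * xi = w := by
  simp [eisenstein, Submodule.mem_span_pair]

lemma xi_mem_eisenstein : xi ∈ eisenstein := Submodule.subset_span (by simp)

lemma one_mem_eisenstein : (1 : ℂ) ∈ eisenstein := Submodule.subset_span (by simp)

lemma mul_mem_eisenstein {v w : ℂ} (hv : v ∈ eisenstein) (hw : w ∈ eisenstein) :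
    v * w ∈ eisenstein := by
  obtain ⟨a, b, rfl⟩ := mem_eisenstein_iff.mp hv
  obtain ⟨c, d, rfl⟩ := mem_eisenstein_iff.mp hw
  refine mem_eisenstein_iff.mpr ⟨a * c - b * d, a * d + b * c - b * d, ?_⟩
  push_cast
  linear_combination (-(b : ℂ) * d) * xi_sq_add_xi_add_one

lemma Ltorus_eq_prod : Ltorus = eisenstein.prod eisenstein := by
  rw [eisenstein, ← LinearMap.span_inl_union_inr, Ltorus]
  simp only [Set.image_insert_eq, Set.image_singleton, LinearMap.inl_apply, LinearMap.inr_apply,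
    Set.insert_union, Set.singleton_union]

lemma mem_Ltorus_iff {z : ℂ × ℂ} : z ∈ Ltorus ↔ z.1 ∈ eisenstein ∧ z.2 ∈ eisenstein := by
  rw [Ltorus_eq_prod, Submodule.mem_prod]

lemma xi_inv_mem_eisenstein : xi⁻¹ ∈ eisenstein := by
  rw [xi_inv, sq]
  exact mul_mem_eisenstein xi_mem_eisenstein xi_mem_eisenstein

lemma image_gmap_Ltorus : gmap '' (Ltorus : Set (ℂ × ℂ)) = Ltorus := by
  ext z
  simp only [Set.mem_image, SetLike.mem_coe, mem_Ltorus_iff]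
  constructor
  · rintro ⟨w, ⟨hw₁, hw₂⟩, rfl⟩
    exact ⟨mul_mem_eisenstein xi_mem_eisenstein hw₁, mul_mem_eisenstein xi_inv_mem_eisenstein hw₂⟩
  · rintro ⟨hz₁, hz₂⟩
    refine ⟨(xi⁻¹ * z.1, xi * z.2), ⟨mul_mem_eisenstein xi_inv_mem_eisenstein hz₁,
      mul_mem_eisenstein xi_mem_eisenstein hz₂⟩, ?_⟩
    simp [gmap, xi_ne_zero]

def fixedModEisenstein : Set ℂ :=
  {w | ∃ t : ℤ, ∃ e ∈ eisenstein, w = t * (xi + 2) / 3 + e}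

lemma mul_mem_fixedModEisenstein {e : ℂ} (he : e ∈ eisenstein) :
    (xi + 2) / 3 * e ∈ fixedModEisenstein := by
  obtain ⟨a, b, rfl⟩ := mem_eisenstein_iff.mp he
  refine ⟨a + b, -b, mem_eisenstein_iff.mpr ⟨-b, 0, by simp⟩, ?_⟩
  push_cast
  linear_combination (b / 3 : ℂ) * xi_sq_add_xi_add_one

lemma mul_mem_eisenstein_iff {u v w : ℂ} (hu : u ∈ eisenstein) (hv : v ∈ eisenstein)
    (huc : u * ((xi + 2) / 3) ∈ eisenstein) (hvuc : v * u * ((xi + 2) / 3) = 1) :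
    u * w ∈ eisenstein ↔ w ∈ fixedModEisenstein := by
  constructor
  · intro huw
    convert mul_mem_fixedModEisenstein (mul_mem_eisenstein hv huw) using 1
    linear_combination (-w) * hvuc
  · rintro ⟨t, e, he, rfl⟩
    have : u * (t * (xi + 2) / 3 + e) = t • (u * ((xi + 2) / 3)) + u * e := by
      simp only [zsmul_eq_mul]; ring
    rw [this]
    exact add_mem (Submodule.smul_mem _ t huc) (mul_mem_eisenstein hu he)

lemma xi_sub_one_mul_mem_eisenstein_iff {w : ℂ} :
    (xi - 1) * w ∈ eisenstein ↔ w ∈ fixedModEisenstein := by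
  have huc : (xi - 1) * ((xi + 2) / 3) = -1 := by
    linear_combination xi_sq_add_xi_add_one / 3
  refine mul_mem_eisenstein_iff (v := -1) ?_ ?_ ?_ ?_
  · exact sub_mem xi_mem_eisenstein one_mem_eisenstein
  · exact neg_mem one_mem_eisenstein
  · rw [huc]; exact neg_mem one_mem_eisenstein
  · rw [mul_assoc, huc]; norm_num

lemma xi_inv_sub_one_mul_mem_eisenstein_iff {w : ℂ} :
    (xi⁻¹ - 1) * w ∈ eisenstein ↔ w ∈ fixedModEisenstein := by
  have huc : (xi⁻¹ - 1) * ((xi + 2) / 3) = xi ^ 2 := by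
    rw [xi_inv]; linear_combination (xi_pow_three - xi_sq_add_xi_add_one) / 3
  refine mul_mem_eisenstein_iff (v := xi) ?_ xi_mem_eisenstein ?_ ?_
  · exact sub_mem xi_inv_mem_eisenstein one_mem_eisenstein
  · rw [huc, sq]; exact mul_mem_eisenstein xi_mem_eisenstein xi_mem_eisenstein
  · rw [mul_assoc, huc]; linear_combination xi_pow_three

lemma gmap_sub_self (z : ℂ × ℂ) : gmap z - z = ((xi - 1) * z.1, (xi⁻¹ - 1) * z.2) := by
  ext <;> simp [gmap] <;> ring

lemma exists_add_mem_Ltorus_iff {z : ℂ × ℂ} :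
    (∃ t₁ t₂ : ℤ, ∃ l ∈ Ltorus,
      z = (((t₁ : ℂ) * (xi + 2) / 3, (t₂ : ℂ) * (xi + 2) / 3) : ℂ × ℂ) + l) ↔
    z.1 ∈ fixedModEisenstein ∧ z.2 ∈ fixedModEisenstein := by
  constructor
  · rintro ⟨t₁, t₂, l, hl, rfl⟩
    exact ⟨⟨t₁, l.1, (mem_Ltorus_iff.mp hl).1, rfl⟩, ⟨t₂, l.2, (mem_Ltorus_iff.mp hl).2, rfl⟩⟩
  · rintro ⟨⟨t₁, e₁, he₁, hz₁⟩, ⟨t₂, e₂, he₂, hz₂⟩⟩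
    exact ⟨t₁, t₂, (e₁, e₂), mem_Ltorus_iff.mpr ⟨he₁, he₂⟩, Prod.ext hz₁ hz₂⟩

lemma three_dvd_of_intCast_mul_mem_eisenstein {k : ℤ}
    (hk : (k : ℂ) * (xi + 2) / 3 ∈ eisenstein) : 3 ∣ k := by
  obtain ⟨a, b, hab⟩ := mem_eisenstein_iff.mp hk
  have h : ((2 * k - 3 * a : ℤ) : ℂ) + ((k - 3 * b : ℤ) : ℂ) * xi = 0 := by
    push_cast; linear_combination -3 * hab
  exact ⟨b, by linarith [(intCast_add_intCast_mul_xi_eq_zero h).2]⟩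

lemma eq_of_natCast_mul_sub_mem_eisenstein {i j : Fin 3}
    (h : ((i : ℕ) : ℂ) * (xi + 2) / 3 - ((j : ℕ) : ℂ) * (xi + 2) / 3 ∈ eisenstein) : i = j := by
  have h3 : (3 : ℤ) ∣ (i : ℕ) - (j : ℕ) :=
    three_dvd_of_intCast_mul_mem_eisenstein (by push_cast; convert h using 1; ring)
  omega

theorem statement0 :
    -- g maps L onto itself
    (gmap '' (Ltorus : Set (ℂ × ℂ)) = (Ltorus : Set (ℂ × ℂ))) ∧
    -- the set of points fixed modulo L by the induced map on T = ℂ²/L is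
    -- {(t₁·(ξ+2)/3, t₂·(ξ+2)/3) : t₁, t₂ ∈ ℤ} + L
    ({z : ℂ × ℂ | gmap z - z ∈ Ltorus} =
      {w : ℂ × ℂ | ∃ t₁ t₂ : ℤ, ∃ l ∈ Ltorus,
        w = (((t₁ : ℂ) * (xi + 2) / 3, (t₂ : ℂ) * (xi + 2) / 3) : ℂ × ℂ) + l}) ∧
    -- the nine classes modulo L for (t₁,t₂) ∈ {0,1,2}² are pairwise distinct
    (∀ t s : Fin 3 × Fin 3,
      ((((t.1 : ℕ) : ℂ) * (xi + 2) / 3 - ((s.1 : ℕ) : ℂ) * (xi + 2) / 3,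
        ((t.2 : ℕ) : ℂ) * (xi + 2) / 3 - ((s.2 : ℕ) : ℂ) * (xi + 2) / 3) : ℂ × ℂ) ∈ Ltorus →
      t = s) := by
  refine ⟨image_gmap_Ltorus, ?_, ?_⟩
  · ext z
    rw [Set.mem_ofPred_eq, Set.mem_ofPred_eq, exists_add_mem_Ltorus_iff, gmap_sub_self,
      mem_Ltorus_iff, xi_sub_one_mul_mem_eisenstein_iff, xi_inv_sub_one_mul_mem_eisenstein_iff]
  · intro t s h
    obtain ⟨h₁, h₂⟩ := mem_Ltorus_iff.mp h
    exact Prod.ext (eq_of_natCast_mul_sub_mem_eisenstein h₁)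
      (eq_of_natCast_mul_sub_mem_eisenstein h₂)
end
end

section
/- (i) The dual lattice P* equals the ℤ-span of R together with the vectors e(L') over all affine lines L' ⊆ 𝔽₃². (ii) The discriminant group P*/P is isomorphic to (ℤ/3)³ and is generated by p₁ + P, p₂ + P, p₃ + P. (iii) The bilinear form on the discriminant group is diagonal with respect to these generators, i.e. b_P(p_i + P, p_j + P) = 0 in ℚ/ℤ for i ≠ j, and the discriminant form takes the values q_P(p_j + P) = 2/3 mod 2ℤ for j = 1, 2, 3. -/
noncomputable section

abbrev F3 : Type := ZMod 3 × ZMod 3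
abbrev IP : Type := F3 × Fin 2
abbrev VP : Type := IP → ℚ

/-- The basis vectors `E_t^(k)` (with `k : Fin 2` corresponding to `k+1 ∈ {1,2}`). -/
def Ev (t : F3) (k : Fin 2) : VP := Pi.single (t, k) 1

/-- Gram coefficients of the bilinear form on `V`. -/
def GP : IP → IP → ℚ := fun i j =>
  if i.1 = j.1 then (if i.2 = j.2 then -2 else 1) else 0

/-- The symmetric bilinear form on `V`. -/
def BP (x y : VP) : ℚ := ∑ i : IP, ∑ j : IP, x i * GP i j * y j

lemma BP_add_left (a b x : VP) : BP (a + b) x = BP a x + BP b x := by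
  simp only [BP, Pi.add_apply, add_mul, Finset.sum_add_distrib]

lemma BP_zsmul_left (c : ℤ) (a x : VP) : BP (c • a) x = c * BP a x := by
  simp only [BP, Pi.smul_apply, zsmul_eq_mul, Finset.mul_sum, mul_assoc]

lemma BP_zero_left (x : VP) : BP 0 x = 0 := by
  simp [BP]

/-- `E_t := E_t^(1) + 2·E_t^(2)`. -/
def EV (t : F3) : VP := Ev t 0 + 2 • Ev t 1

/-- The affine line in `𝔽₃²` through `p` with direction `d`. -/
def lineF (p d : F3) : Finset F3 := Finset.image (fun s : ZMod 3 => p + s • d) Finset.univ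

def IsLine (L : Finset F3) : Prop := ∃ p d : F3, d ≠ 0 ∧ L = lineF p d

def AreParallel (L L' : Finset F3) : Prop :=
  ∃ p p' d : F3, d ≠ 0 ∧ L = lineF p d ∧ L' = lineF p' d

/-- `e(L) := (1/3)·∑_{t∈L} E_t`. -/
def eL (L : Finset F3) : VP := (3 : ℚ)⁻¹ • ∑ t ∈ L, EV t

/-- Generators of the root lattice `R` of type `A₂⁹`. -/
def Rgen : Set VP := {x | ∃ t k, x = Ev t k}

/-- The root lattice `R`. -/
def Rlat : Submodule ℤ VP := Submodule.span ℤ Rgen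

/-- The lattice `P`. -/
def Plat : Submodule ℤ VP :=
  Submodule.span ℤ (Rgen ∪ {x | ∃ L L', AreParallel L L' ∧ x = eL L - eL L'})

/-- The dual lattice `Λ* = {v | ⟨v,λ⟩ ∈ ℤ for all λ ∈ Λ}`. -/
def dualP (Λ : Submodule ℤ VP) : Submodule ℤ VP where
  carrier := {v | ∀ x ∈ Λ, ∃ n : ℤ, BP v x = n}
  zero_mem' := fun x _ => ⟨0, by simp [BP_zero_left]⟩
  add_mem' := by
    intro a b ha hb x hx
    obtain ⟨n, hn⟩ := ha x hx
    obtain ⟨m, hm⟩ := hb x hx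
    exact ⟨n + m, by rw [BP_add_left, hn, hm]; push_cast; ring⟩
  smul_mem' := by
    intro c v hv x hx
    obtain ⟨n, hn⟩ := hv x hx
    exact ⟨c * n, by rw [BP_zsmul_left, hn]; push_cast; ring⟩

def L12 : Finset F3 := lineF (0, 0) (0, 1)
def L34 : Finset F3 := lineF (0, 0) (1, 0)
def L00 : Finset F3 := lineF (0, 0) (1, 1)

def p1 : VP := eL L34 + eL L00
def p2 : VP := eL L12 + eL L34
def p3 : VP := eL L12 + eL L00

def pv : Fin 3 → VP := ![p1, p2, p3]

/-! ### Bilinearity infrastructure -/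

lemma BP_qsmul_left (c : ℚ) (a x : VP) : BP (c • a) x = c * BP a x := by
  simp only [BP, Pi.smul_apply, smul_eq_mul, Finset.mul_sum, mul_assoc]

lemma BP_add_right (x a b : VP) : BP x (a + b) = BP x a + BP x b := by
  simp only [BP, Pi.add_apply, mul_add, Finset.sum_add_distrib]

lemma BP_qsmul_right (c : ℚ) (x a : VP) : BP x (c • a) = c * BP x a := by
  simp only [BP, Pi.smul_apply, smul_eq_mul, Finset.mul_sum]
  refine Finset.sum_congr rfl fun i _ => ?_
  exact Finset.sum_congr rfl fun j _ => by ring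

def BPL : VP →ₗ[ℚ] VP →ₗ[ℚ] ℚ :=
  LinearMap.mk₂ ℚ BP BP_add_left (fun c a x => BP_qsmul_left c a x)
    BP_add_right (fun c a x => BP_qsmul_right c a x)

lemma BP_eq_BPL (x y : VP) : BP x y = BPL x y := rfl

lemma BP_sub_right (x a b : VP) : BP x (a - b) = BP x a - BP x b := by
  simp only [BP_eq_BPL, map_sub]

lemma BP_sum_right (x : VP) (s : Finset F3) (f : F3 → VP) :
    BP x (∑ t ∈ s, f t) = ∑ t ∈ s, BP x (f t) := by
  simp only [BP_eq_BPL, map_sum]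

lemma BP_sum_left (x : VP) (s : Finset (Fin 12)) (f : Fin 12 → VP) :
    BP (∑ t ∈ s, f t) x = ∑ t ∈ s, BP (f t) x := by
  simp only [BP_eq_BPL, map_sum, LinearMap.coe_sum, Finset.sum_apply]

lemma GP_comm (i j : IP) : GP i j = GP j i := by
  unfold GP
  rcases i with ⟨s, k⟩; rcases j with ⟨t, l⟩
  by_cases h1 : s = t <;> by_cases h2 : k = l
  · simp [h1, h2]
  · simp [h1, h2, if_neg (fun h : l = k => h2 h.symm)]
  · simp [h1, h2, if_neg (fun h : t = s => h1 h.symm)]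
  · simp [h1, h2, if_neg (fun h : t = s => h1 h.symm)]

lemma BP_comm (x y : VP) : BP x y = BP y x := by
  unfold BP
  rw [Finset.sum_comm]
  exact Finset.sum_congr rfl fun j _ => Finset.sum_congr rfl fun i _ => by
    rw [GP_comm]; ring

/-! ### Evaluation lemmas -/

lemma BP_Ev_right (v : VP) (t : F3) (k : Fin 2) :
    BP v (Ev t k) = v (t,0) * GP (t,0) (t,k) + v (t,1) * GP (t,1) (t,k) := by
  simp only [BP, Ev, Pi.single_apply, mul_ite, mul_one, mul_zero, Finset.sum_ite_eq',
    Finset.mem_univ, if_true]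
  rw [Fintype.sum_prod_type]
  have h : ∀ s : F3, (∑ l : Fin 2, v (s,l) * GP (s,l) (t,k))
      = if s = t then (v (s,0) * GP (s,0) (t,k) + v (s,1) * GP (s,1) (t,k)) else 0 := by
    intro s; by_cases h : s = t
    · simp [Fin.sum_univ_two, h]
    · simp [Fin.sum_univ_two, GP, h]
  rw [Finset.sum_congr rfl (fun s _ => h s), Finset.sum_ite_eq' Finset.univ t]
  simp

lemma BP_Ev0_right (v : VP) (t : F3) :
    BP v (Ev t 0) = -2 * v (t,0) + v (t,1) := by
  rw [BP_Ev_right]; simp [GP]; ring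

lemma BP_Ev1_right (v : VP) (t : F3) :
    BP v (Ev t 1) = v (t,0) - 2 * v (t,1) := by
  rw [BP_Ev_right]; simp [GP]; ring

lemma BP_EV_right (v : VP) (t : F3) : BP v (EV t) = -3 * v (t,1) := by
  have h2 : (2:ℕ) • Ev t 1 = (2:ℚ) • Ev t 1 := by
    funext i; simp
  rw [EV, BP_add_right, h2, BP_qsmul_right, BP_Ev0_right, BP_Ev1_right]; ring

lemma BP_eL_right (v : VP) (L : Finset F3) :
    BP v (eL L) = -∑ t ∈ L, v (t,1) := by
  rw [eL, BP_qsmul_right, BP_sum_right]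
  simp only [BP_EV_right]
  rw [← Finset.sum_neg_distrib, Finset.mul_sum]
  exact Finset.sum_congr rfl fun t _ => by ring


/-! ### Coordinates of eL -/

lemma eL_apply (L : Finset F3) (t : F3) (k : Fin 2) :
    eL L (t,k) = if t ∈ L then (if k = 0 then 1/3 else 2/3) else 0 := by
  have : (∑ s ∈ L, EV s) (t,k) = ∑ s ∈ L, EV s (t,k) := Finset.sum_apply _ _ _
  rw [eL, Pi.smul_apply, this]
  have hev : ∀ s : F3, EV s (t,k) = if s = t then (if k = 0 then 1 else 2) else 0 := by
    intro s
    fin_cases k <;>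
      simp [EV, Ev, Pi.single_apply, Prod.ext_iff] <;>
      by_cases h : s = t <;> simp [h, eq_comm]
  rw [Finset.sum_congr rfl fun s _ => hev s, Finset.sum_ite_eq' L t]
  by_cases ht : t ∈ L <;> fin_cases k <;> simp [ht] <;> norm_num

lemma BP_eL_eL (L L' : Finset F3) :
    BP (eL L) (eL L') = -(2/3) * ((L' ∩ L).card : ℚ) := by
  rw [BP_eL_right]
  have : ∀ t ∈ L', eL L (t,1) = if t ∈ L then (2/3 : ℚ) else 0 := by
    intro t _; rw [eL_apply]; simp
  rw [Finset.sum_congr rfl this, Finset.sum_ite_mem, Finset.sum_const]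
  simp; ring

lemma BP_eL_Ev (L : Finset F3) (t : F3) (k : Fin 2) :
    BP (eL L) (Ev t k) = if t ∈ L then (if k = 0 then 0 else -1) else 0 := by
  rw [BP_Ev_right, eL_apply, eL_apply]
  by_cases h : t ∈ L <;> fin_cases k <;> simp [h, GP] <;> norm_num

/-! ### Integer vectors -/

def intVec (f : IP → ℤ) : VP := fun i => (f i : ℚ)

def Zint : Submodule ℤ VP where
  carrier := {v | ∀ i : IP, ∃ n : ℤ, v i = n}
  zero_mem' := fun i => ⟨0, rfl⟩
  add_mem' := by
    rintro a b ha hb i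
    obtain ⟨n, hn⟩ := ha i; obtain ⟨m, hm⟩ := hb i
    exact ⟨n + m, by simp [hn, hm]⟩
  smul_mem' := by
    rintro c v hv i
    obtain ⟨n, hn⟩ := hv i
    exact ⟨c * n, by simp [hn]⟩

lemma intVec_mem_Zint (f : IP → ℤ) : intVec f ∈ Zint := fun i => ⟨f i, rfl⟩

lemma Zint_le_Rlat : Zint ≤ Rlat := by
  intro v hv
  choose n hn using hv
  have hv' : v = ∑ i : IP, n i • (Pi.single i (1:ℚ) : VP) := by
    funext j
    rw [Finset.sum_apply]
    have : ∀ i : IP, (n i • (Pi.single i (1:ℚ) : VP)) j = if j = i then (n i : ℚ) else 0 := by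
      intro i; by_cases h : j = i <;> simp [Pi.single_apply, h]
    rw [Finset.sum_congr rfl fun i _ => this i, Finset.sum_ite_eq Finset.univ j]
    simp [hn j]
  rw [hv']
  exact Submodule.sum_mem _ fun i _ =>
    Submodule.smul_mem _ _ (Submodule.subset_span ⟨i.1, i.2, rfl⟩)

lemma Rlat_le_Zint : Rlat ≤ Zint := by
  rw [Rlat, Submodule.span_le]
  rintro x ⟨t, k, rfl⟩ i
  by_cases h : i = (t, k)
  · exact ⟨1, by simp [Ev, Pi.single_apply, h]⟩
  · exact ⟨0, by simp [Ev, Pi.single_apply, h]⟩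

/-! ### The twelve lines -/

def lpt : Fin 12 → F3 :=
  ![(0,0),(1,0),(2,0),(0,0),(0,1),(0,2),(0,0),(0,1),(0,2),(0,0),(0,1),(0,2)]

def ldir : Fin 12 → F3 :=
  ![(0,1),(0,1),(0,1),(1,0),(1,0),(1,0),(1,1),(1,1),(1,1),(1,2),(1,2),(1,2)]

def lineList (i : Fin 12) : Finset F3 := lineF (lpt i) (ldir i)

def dir4 : Fin 4 → F3 := ![(0,1),(1,0),(1,1),(1,2)]

lemma ldir_ne_zero : ∀ i : Fin 12, ldir i ≠ 0 := by decide

lemma isLine_lineList (i : Fin 12) : IsLine (lineList i) :=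
  ⟨lpt i, ldir i, ldir_ne_zero i, rfl⟩

lemma line_canon : ∀ d : F3, d ≠ 0 → ∃ k : Fin 4, ∀ p, lineF p d = lineF p (dir4 k) := by
  decide

lemma line_idx : ∀ (p : F3) (k : Fin 4), ∃ a : Fin 3,
    lineF p (dir4 k) = lineList ⟨3 * k.val + a.val, by omega⟩ := by
  decide

lemma par_eq_or_disjoint : ∀ (p p' : F3) (k : Fin 4),
    lineF p (dir4 k) = lineF p' (dir4 k) ∨ lineF p (dir4 k) ∩ lineF p' (dir4 k) = ∅ := by
  decide

lemma cross_card_one : ∀ (p p' : F3) (k k' : Fin 4), k ≠ k' →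
    (lineF p (dir4 k) ∩ lineF p' (dir4 k')).card = 1 := by
  decide

lemma line_card : ∀ (p : F3) (k : Fin 4), (lineF p (dir4 k)).card = 3 := by
  decide

/-! ### Q lattice and duality (easy inclusion) -/

def Qgen : Set VP := Rgen ∪ {x | ∃ L, IsLine L ∧ x = eL L}

def Qlat : Submodule ℤ VP := Submodule.span ℤ Qgen

def gpZ : IP → IP → ℤ := fun i j => if i.1 = j.1 then (if i.2 = j.2 then -2 else 1) else 0

lemma GP_cast (i j : IP) : GP i j = (gpZ i j : ℚ) := by
  unfold GP gpZ; split_ifs <;> norm_num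

lemma BP_int_int (x y : VP) (hx : x ∈ Zint) (hy : y ∈ Zint) : ∃ n : ℤ, BP x y = n := by
  choose a ha using hx; choose b hb using hy
  refine ⟨∑ i : IP, ∑ j : IP, a i * gpZ i j * b j, ?_⟩
  rw [BP]; push_cast
  exact Finset.sum_congr rfl fun i _ => Finset.sum_congr rfl fun j _ => by
    rw [ha, hb, GP_cast]

lemma BP_zero_right (v : VP) : BP v 0 = 0 := by
  rw [BP_comm]; exact BP_zero_left v

lemma BP_zsmul_right (c : ℤ) (x a : VP) : BP x (c • a) = c * BP x a := by
  rw [BP_comm, BP_zsmul_left, BP_comm]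

def rightInt (v : VP) : Submodule ℤ VP where
  carrier := {x | ∃ n : ℤ, BP v x = n}
  zero_mem' := ⟨0, by rw [BP_zero_right]; norm_num⟩
  add_mem' := by
    rintro a b ⟨n, hn⟩ ⟨m, hm⟩
    exact ⟨n + m, by rw [BP_add_right, hn, hm]; push_cast; ring⟩
  smul_mem' := by
    rintro c x ⟨n, hn⟩
    exact ⟨c * n, by rw [BP_zsmul_right, hn]; push_cast; ring⟩

def PlatGen : Set VP := Rgen ∪ {x | ∃ L L', AreParallel L L' ∧ x = eL L - eL L'}

lemma mem_dual_of_gens (v : VP) (h : ∀ x ∈ PlatGen, ∃ n : ℤ, BP v x = n) :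
    v ∈ dualP Plat := by
  intro x hx
  have hle : Plat ≤ rightInt v := Submodule.span_le.2 h
  exact hle hx

lemma Ev_mem_Zint (t : F3) (k : Fin 2) : Ev t k ∈ Zint :=
  Rlat_le_Zint (Submodule.subset_span ⟨t, k, rfl⟩)

lemma inter_congr (k'' k : Fin 4) (p p' p'' : F3) : ∃ n : ℤ,
    ((lineF p (dir4 k) ∩ lineF p'' (dir4 k'')).card : ℤ)
      = ((lineF p' (dir4 k) ∩ lineF p'' (dir4 k'')).card : ℤ) + 3 * n := by
  by_cases hk : k = k''
  · subst hk
    have h1 := par_eq_or_disjoint p p'' k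
    have h2 := par_eq_or_disjoint p' p'' k
    have c1 : (lineF p (dir4 k) ∩ lineF p'' (dir4 k)).card = 3 ∨
        (lineF p (dir4 k) ∩ lineF p'' (dir4 k)).card = 0 := by
      rcases h1 with h | h
      · left; rw [h, Finset.inter_self, line_card]
      · right; rw [h]; rfl
    have c2 : (lineF p' (dir4 k) ∩ lineF p'' (dir4 k)).card = 3 ∨
        (lineF p' (dir4 k) ∩ lineF p'' (dir4 k)).card = 0 := by
      rcases h2 with h | h
      · left; rw [h, Finset.inter_self, line_card]
      · right; rw [h]; rfl
    rcases c1 with h | h <;> rcases c2 with h' | h' <;>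
      [exact ⟨0, by rw [h, h']; ring⟩; exact ⟨1, by rw [h, h']; ring⟩;
       exact ⟨-1, by rw [h, h']; ring⟩; exact ⟨0, by rw [h, h']; ring⟩]
  · refine ⟨0, ?_⟩
    rw [cross_card_one p p'' k k'' hk, cross_card_one p' p'' k k'' hk]; ring

lemma Qgen_sub_dual : ∀ v ∈ Qgen, v ∈ dualP Plat := by
  rintro v (⟨t, k, rfl⟩ | ⟨L, ⟨q, e, he, rfl⟩, rfl⟩) <;>
    apply mem_dual_of_gens <;>
    rintro x (⟨s, l, rfl⟩ | ⟨L1, L2, ⟨a, a', dd, hdd, rfl, rfl⟩, rfl⟩)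
  · exact BP_int_int _ _ (Ev_mem_Zint t k) (Ev_mem_Zint s l)
  · -- Ev vs difference of parallel eL's
    rw [BP_sub_right, BP_comm _ (eL _), BP_comm _ (eL _), BP_eL_Ev, BP_eL_Ev]
    refine ⟨(if t ∈ lineF a dd then (if k = 0 then 0 else -1) else 0)
      - (if t ∈ lineF a' dd then (if k = 0 then 0 else -1) else 0), ?_⟩
    push_cast
    split_ifs <;> norm_num
  · -- eL vs Ev
    rw [BP_eL_Ev]
    refine ⟨if s ∈ lineF q e then (if l = 0 then 0 else -1) else 0, ?_⟩
    split_ifs <;> norm_num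
  · -- eL vs difference
    obtain ⟨k'', hk''⟩ := line_canon e he
    obtain ⟨k, hk⟩ := line_canon dd hdd
    obtain ⟨n, hn⟩ := inter_congr k'' k a a' q
    refine ⟨-2 * n, ?_⟩
    rw [hk'' q, hk a, hk a', BP_sub_right, BP_eL_eL, BP_eL_eL]
    have hq : ((lineF a (dir4 k) ∩ lineF q (dir4 k'')).card : ℚ)
        = ((lineF a' (dir4 k) ∩ lineF q (dir4 k'')).card : ℚ) + 3 * (n : ℚ) := by
      exact_mod_cast congrArg (fun z : ℤ => (z : ℚ)) hn
    push_cast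
    linear_combination (-2/3 : ℚ) * hq

lemma Qlat_le_dual : Qlat ≤ dualP Plat :=
  Submodule.span_le.2 Qgen_sub_dual

/-! ### GF(3) reconstruction -/

def coefF (β : F3 → ZMod 3) : Fin 12 → ZMod 3 := fun i =>
  if i = 0 then β (0,2)
  else if i = 1 then β (0,0)+β (0,1)+β (0,2)+2*β (1,0)+2*β (1,1)
  else if i = 2 then β (0,0)+β (0,1)+β (0,2)+β (1,0)+2*β (1,1)+β (2,0)
  else if i = 3 then 2*β (0,0)+2*β (0,1)+2*β (0,2)+2*β (1,0)+β (1,1)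
  else if i = 4 then β (0,1)+2*β (0,2)
  else if i = 6 then 2*β (0,0)+β (0,1)+β (1,0)+2*β (1,1)
  else 0

lemma sum12 {M : Type} [AddCommMonoid M] (γ : Fin 12 → M) : ∑ i, γ i
    = γ 0 + (γ 1 + (γ 2 + (γ 3 + (γ 4 + (γ 5 + (γ 6 + (γ 7 + (γ 8 + (γ 9 + (γ 10 + γ 11)))))))))) := by
  rw [show (Finset.univ : Finset (Fin 12)) = ({0,1,2,3,4,5,6,7,8,9,10,11} : Finset (Fin 12)) from by decide]
  simp (config := { decide := true }) [Finset.sum_insert, Finset.sum_singleton]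

lemma gf3 (β : F3 → ZMod 3)
    (h1 : β (0,0)+β (0,1)+β (0,2) = β (1,0)+β (1,1)+β (1,2))
    (h2 : β (0,0)+β (0,1)+β (0,2) = β (2,0)+β (2,1)+β (2,2))
    (h3 : β (0,0)+β (1,0)+β (2,0) = β (0,1)+β (1,1)+β (2,1))
    (t : F3) :
    β t = ∑ i : Fin 12, coefF β i * (if t ∈ lineList i then 1 else 0) := by
  have h0 : (3 : ZMod 3) = 0 := by decide
  rw [sum12]
  fin_cases t
  · show β (0,0) = _
    simp (config := { decide := true }) only [coefF, if_true, if_false, mul_one, mul_zero, add_zero, zero_add]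
    linear_combination (-(β (0,0))-β (0,1)-β (0,2)-β (1,0)-β (1,1))*h0
  · show β (0,1) = _
    simp (config := { decide := true }) only [coefF, if_true, if_false, mul_one, mul_zero, add_zero, zero_add]
    linear_combination (-(β (0,2)))*h0
  · show β (0,2) = _
    simp (config := { decide := true }) only [coefF, if_true, if_false, mul_one, mul_zero, add_zero, zero_add]
  · show β (1,0) = _
    simp (config := { decide := true }) only [coefF, if_true, if_false, mul_one, mul_zero, add_zero, zero_add]
    linear_combination (-(β (0,0))-β (0,1)-β (0,2)-β (1,0)-β (1,1))*h0
  · show β (1,1) = _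
    simp (config := { decide := true }) only [coefF, if_true, if_false, mul_one, mul_zero, add_zero, zero_add]
    linear_combination (-(β (0,0))-β (0,1)-β (0,2)-β (1,0)-β (1,1))*h0
  · show β (1,2) = _
    simp (config := { decide := true }) only [coefF, if_true, if_false, mul_one, mul_zero, add_zero, zero_add]
    linear_combination 2*h1 + (-(β (0,0))-β (0,1)-β (0,2)+β (1,2))*h0
  · show β (2,0) = _
    simp (config := { decide := true }) only [coefF, if_true, if_false, mul_one, mul_zero, add_zero, zero_add]
    linear_combination (-(β (0,0))-β (0,1)-β (0,2)-β (1,0)-β (1,1))*h0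
  · show β (2,1) = _
    simp (config := { decide := true }) only [coefF, if_true, if_false, mul_one, mul_zero, add_zero, zero_add]
    linear_combination 2*h3 + (-(β (0,0))-β (0,2)-β (1,0)-β (2,0)+β (2,1))*h0
  · show β (2,2) = _
    simp (config := { decide := true }) only [coefF, if_true, if_false, mul_one, mul_zero, add_zero, zero_add]
    linear_combination 2*h2 + h3 + (-2*β (0,0)-β (0,1)-β (0,2)-β (1,0)-β (1,1)+β (2,1)+β (2,2))*h0

/-! ### Hard inclusion: dual ⊆ Qlat -/

lemma sum_line3 {M : Type} [AddCommMonoid M] (f : F3 → M) (a b c : F3) (L : Finset F3)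
    (hL : L = {a,b,c}) (hab : a ≠ b) (hac : a ≠ c) (hbc : b ≠ c) :
    ∑ t ∈ L, f t = f a + f b + f c := by
  subst hL
  rw [show ({a,b,c} : Finset F3) = insert a (insert b ({c} : Finset F3)) from rfl]
  rw [Finset.sum_insert (by simp [hab, hac]), Finset.sum_insert (by simp [hbc]),
    Finset.sum_singleton, add_assoc]

lemma Ev_mem_Plat (t : F3) (k : Fin 2) : Ev t k ∈ Plat :=
  Submodule.subset_span (Or.inl ⟨t, k, rfl⟩)

lemma parallel_lineList (i j : Fin 12) (hij : ldir i = ldir j) :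
    AreParallel (lineList i) (lineList j) :=
  ⟨lpt i, lpt j, ldir i, ldir_ne_zero i, rfl, by rw [hij]; rfl⟩

lemma diff_mem_Plat (i j : Fin 12) (hij : ldir i = ldir j) :
    eL (lineList i) - eL (lineList j) ∈ Plat :=
  Submodule.subset_span (Or.inr ⟨_, _, parallel_lineList i j hij, rfl⟩)

lemma Rlat_le_Qlat : Rlat ≤ Qlat := Submodule.span_mono Set.subset_union_left

lemma eL_mem_Qlat (i : Fin 12) : eL (lineList i) ∈ Qlat :=
  Submodule.subset_span (Or.inr ⟨lineList i, isLine_lineList i, rfl⟩)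

lemma dual_le_Qlat : dualP Plat ≤ Qlat := by
  intro v hv
  have hzero : (3 : ZMod 3) = 0 := by decide
  -- Step 1: integrality data at each point
  have h0 : ∀ t : F3, ∃ n : ℤ, -2 * v (t,0) + v (t,1) = (n:ℚ) := fun t => by
    obtain ⟨n, hn⟩ := hv _ (Ev_mem_Plat t 0)
    exact ⟨n, by rw [← BP_Ev0_right v t]; exact hn⟩
  have h1 : ∀ t : F3, ∃ n : ℤ, v (t,0) - 2 * v (t,1) = (n:ℚ) := fun t => by
    obtain ⟨n, hn⟩ := hv _ (Ev_mem_Plat t 1)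
    exact ⟨n, by rw [← BP_Ev1_right v t]; exact hn⟩
  choose n0 hn0 using h0
  choose n1 hn1 using h1
  set m : F3 → ℤ := fun t => -(n0 t + 2 * n1 t) with hm_def
  have hm : ∀ t, (3:ℚ) * v (t,1) = ((m t : ℤ) : ℚ) := by
    intro t; push_cast [hm_def]; linear_combination (-1 : ℚ) * hn0 t - 2 * hn1 t
  set sQ : F3 → ℤ := fun t => -(n0 t + n1 t) with hs_def
  have ha : ∀ t, (3:ℚ) * v (t,0) = ((3 * sQ t - m t : ℤ) : ℚ) := by
    intro t; push_cast [hs_def, hm_def]; linear_combination (-2:ℚ) * hn0 t - hn1 t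
  -- Step 2: parallel line conditions, in ZMod 3
  set β : F3 → ZMod 3 := fun t => ((-(m t) : ℤ) : ZMod 3) with hβ_def
  have hM : ∀ L : Finset F3, (3:ℚ) * ∑ t ∈ L, v (t,1) = ((∑ t ∈ L, m t : ℤ) : ℚ) := by
    intro L; rw [Finset.mul_sum]; push_cast
    exact Finset.sum_congr rfl fun t _ => hm t
  have hβsum : ∀ L : Finset F3, ∑ t ∈ L, β t = ((-(∑ t ∈ L, m t) : ℤ) : ZMod 3) := by
    intro L; simp only [hβ_def]; push_cast
    rw [← Finset.sum_neg_distrib]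
  have hcond : ∀ i j : Fin 12, ldir i = ldir j →
      (∑ t ∈ lineList i, β t) = ∑ t ∈ lineList j, β t := by
    intro i j hij
    obtain ⟨n, hn⟩ := hv _ (diff_mem_Plat i j hij)
    rw [BP_sub_right, BP_eL_right, BP_eL_right] at hn
    have hint : (∑ t ∈ lineList j, m t) - (∑ t ∈ lineList i, m t) = 3 * n := by
      have hq : ((∑ t ∈ lineList j, m t : ℤ) : ℚ) - ((∑ t ∈ lineList i, m t : ℤ) : ℚ)
          = ((3 * n : ℤ) : ℚ) := by
        have hMi := hM (lineList i); have hMj := hM (lineList j)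
        push_cast at hMi hMj ⊢
        linear_combination (3:ℚ) * hn + hMi - hMj
      exact_mod_cast hq
    rw [hβsum, hβsum]
    have hcast := congrArg (fun z : ℤ => (z : ZMod 3)) hint
    push_cast at hcast ⊢
    linear_combination hcast + ((n : ℤ) : ZMod 3) * hzero
  have e0 : ∑ t ∈ lineList 0, β t = β (0,0) + β (0,1) + β (0,2) :=
    sum_line3 β _ _ _ _ (by decide) (by decide) (by decide) (by decide)
  have e1 : ∑ t ∈ lineList 1, β t = β (1,0) + β (1,1) + β (1,2) :=
    sum_line3 β _ _ _ _ (by decide) (by decide) (by decide) (by decide)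
  have e2 : ∑ t ∈ lineList 2, β t = β (2,0) + β (2,1) + β (2,2) :=
    sum_line3 β _ _ _ _ (by decide) (by decide) (by decide) (by decide)
  have e3 : ∑ t ∈ lineList 3, β t = β (0,0) + β (1,0) + β (2,0) :=
    sum_line3 β _ _ _ _ (by decide) (by decide) (by decide) (by decide)
  have e4 : ∑ t ∈ lineList 4, β t = β (0,1) + β (1,1) + β (2,1) :=
    sum_line3 β _ _ _ _ (by decide) (by decide) (by decide) (by decide)
  have hrec := gf3 β (by rw [← e0, ← e1]; exact hcond 0 1 (by decide))
    (by rw [← e0, ← e2]; exact hcond 0 2 (by decide))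
    (by rw [← e3, ← e4]; exact hcond 3 4 (by decide))
  -- Step 3: the correction vector
  set c : Fin 12 → ℤ := fun i => ((coefF β i).val : ℤ) with hc_def
  have hc : ∀ i, ((c i : ℤ) : ZMod 3) = coefF β i := by
    intro i; simp only [hc_def]; push_cast
    exact ZMod.natCast_rightInverse (coefF β i)
  set w : VP := ∑ i : Fin 12, c i • eL (lineList i) with hw_def
  have hw : ∀ (t : F3) (k : Fin 2), w (t,k)
      = (∑ i : Fin 12, if t ∈ lineList i then (c i : ℚ) else 0) * (if k = 0 then 1/3 else 2/3) := by
    intro t k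
    rw [hw_def, Finset.sum_apply, Finset.sum_mul]
    refine Finset.sum_congr rfl fun i _ => ?_
    rw [Pi.smul_apply, zsmul_eq_mul, eL_apply]
    split_ifs <;> ring
  -- the integer sums
  set T : F3 → ℤ := fun t => ∑ i : Fin 12, if t ∈ lineList i then c i else 0 with hT_def
  have hTQ : ∀ t, ((T t : ℤ) : ℚ) = ∑ i : Fin 12, if t ∈ lineList i then (c i : ℚ) else 0 := by
    intro t; rw [hT_def]; push_cast
    exact Finset.sum_congr rfl fun i _ => by split_ifs <;> simp
  have hTmod : ∀ t, ((T t : ℤ) : ZMod 3) = β t := by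
    intro t; rw [hT_def]; push_cast
    rw [hrec t]
    refine Finset.sum_congr rfl fun i _ => ?_
    split_ifs with h <;> simp [hc i]
  -- Step 4: v - w has integer coordinates
  have hvw : v - w ∈ Zint := by
    rintro ⟨t, k⟩
    fin_cases k
    · -- slot 0
      show ∃ n : ℤ, (v - w) (t, 0) = (n : ℚ)
      have hdvd : (3:ℤ) ∣ (3 * sQ t - m t - T t) := by
        have hz : ((3 * sQ t - m t - T t : ℤ) : ZMod 3) = 0 := by
          push_cast
          rw [hTmod t]
          simp only [hβ_def]
          push_cast
          linear_combination ((sQ t : ℤ) : ZMod 3) * hzero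
        exact_mod_cast (ZMod.intCast_zmod_eq_zero_iff_dvd _ 3).mp hz
      obtain ⟨q, hq⟩ := hdvd
      refine ⟨q, ?_⟩
      have h3 : (3:ℚ) * (v - w) (t, 0) = ((3 * sQ t - m t - T t : ℤ) : ℚ) := by
        rw [Pi.sub_apply, hw t 0]
        have hk : (if (0 : Fin 2) = 0 then (1/3 : ℚ) else 2/3) = 1/3 := by norm_num
        rw [hk]
        push_cast
        rw [← hTQ t]
        have haa := ha t
        push_cast at haa
        linear_combination haa
      rw [hq] at h3
      push_cast at h3
      linarith
    · -- slot 1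
      show ∃ n : ℤ, (v - w) (t, 1) = (n : ℚ)
      have hdvd : (3:ℤ) ∣ (m t - 2 * T t) := by
        have hz : ((m t - 2 * T t : ℤ) : ZMod 3) = 0 := by
          push_cast
          rw [hTmod t]
          simp only [hβ_def]
          push_cast
          linear_combination ((m t : ℤ) : ZMod 3) * hzero
        exact_mod_cast (ZMod.intCast_zmod_eq_zero_iff_dvd _ 3).mp hz
      obtain ⟨q, hq⟩ := hdvd
      refine ⟨q, ?_⟩
      have h3 : (3:ℚ) * (v - w) (t, 1) = ((m t - 2 * T t : ℤ) : ℚ) := by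
        rw [Pi.sub_apply, hw t 1]
        push_cast
        rw [← hTQ t]
        linear_combination hm t
      rw [hq] at h3
      push_cast at h3
      linarith
  -- Step 5: conclude
  have hsplit : v = (v - w) + w := by ring
  rw [hsplit]
  refine Submodule.add_mem _ (Rlat_le_Qlat (Zint_le_Rlat hvw)) ?_
  exact Submodule.sum_mem _ fun i _ => Submodule.smul_mem _ _ (eL_mem_Qlat i)

theorem dual_eq_Qlat : dualP Plat = Qlat :=
  le_antisymm dual_le_Qlat Qlat_le_dual

lemma eL_apply' (L : Finset F3) (j : IP) :
    eL L j = if j.1 ∈ L then (if j.2 = 0 then 1/3 else 2/3) else 0 := by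
  rw [show j = (j.1, j.2) from rfl]; exact eL_apply L j.1 j.2

/-! ### Gram values of p1,p2,p3 -/

lemma BP_ee (A B C D : Finset F3) : BP (eL A + eL B) (eL C + eL D)
    = -(2/3) * (((C ∩ A).card : ℚ) + ((C ∩ B).card : ℚ) + ((D ∩ A).card : ℚ) + ((D ∩ B).card : ℚ)) := by
  rw [BP_add_left, BP_add_right, BP_add_right, BP_eL_eL, BP_eL_eL, BP_eL_eL, BP_eL_eL]
  ring

lemma G11 : BP p1 p1 = -16/3 := by
  rw [p1, BP_ee]
  norm_num [show (L34 ∩ L34).card = 3 from by decide, show (L34 ∩ L00).card = 1 from by decide,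
    show (L00 ∩ L34).card = 1 from by decide, show (L00 ∩ L00).card = 3 from by decide,
    show L34.card = 3 from by decide, show L00.card = 3 from by decide]

lemma G22 : BP p2 p2 = -16/3 := by
  rw [p2, BP_ee]
  norm_num [show (L12 ∩ L12).card = 3 from by decide, show (L12 ∩ L34).card = 1 from by decide,
    show (L34 ∩ L12).card = 1 from by decide, show (L34 ∩ L34).card = 3 from by decide,
    show L12.card = 3 from by decide, show L34.card = 3 from by decide]

lemma G33 : BP p3 p3 = -16/3 := by
  rw [p3, BP_ee]
  norm_num [show (L12 ∩ L12).card = 3 from by decide, show (L12 ∩ L00).card = 1 from by decide,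
    show (L00 ∩ L12).card = 1 from by decide, show (L00 ∩ L00).card = 3 from by decide,
    show L12.card = 3 from by decide, show L00.card = 3 from by decide]

lemma G12 : BP p1 p2 = -4 := by
  rw [p1, p2, BP_ee]
  norm_num [show (L12 ∩ L34).card = 1 from by decide, show (L12 ∩ L00).card = 1 from by decide,
    show (L34 ∩ L34).card = 3 from by decide, show (L34 ∩ L00).card = 1 from by decide,
    show L34.card = 3 from by decide]

lemma G13 : BP p1 p3 = -4 := by
  rw [p1, p3, BP_ee]
  norm_num [show (L12 ∩ L34).card = 1 from by decide, show (L12 ∩ L00).card = 1 from by decide,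
    show (L00 ∩ L34).card = 1 from by decide, show (L00 ∩ L00).card = 3 from by decide,
    show L00.card = 3 from by decide]

lemma G23 : BP p2 p3 = -4 := by
  rw [p2, p3, BP_ee]
  norm_num [show (L12 ∩ L12).card = 3 from by decide, show (L12 ∩ L34).card = 1 from by decide,
    show (L00 ∩ L12).card = 1 from by decide, show (L00 ∩ L34).card = 1 from by decide,
    show L12.card = 3 from by decide]

lemma G21 : BP p2 p1 = -4 := by rw [BP_comm]; exact G12
lemma G31 : BP p3 p1 = -4 := by rw [BP_comm]; exact G13
lemma G32 : BP p3 p2 = -4 := by rw [BP_comm]; exact G23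

/-! ### Classes of the twelve lines modulo Plat -/

lemma Rlat_le_Plat : Rlat ≤ Plat := Submodule.span_mono Set.subset_union_left

lemma class_decomp (i : Fin 12) (a b c μ1 μ2 μ3 : ℤ) (ρ : F3 → ℤ)
    (hEq : eL (lineList i) - (a • p1 + b • p2 + c • p3)
      = μ1 • (eL (lineList 0) - eL (lineList 1)) + μ2 • (eL (lineList 0) - eL (lineList 2))
        + μ3 • (eL (lineList 3) - eL (lineList 4))
        + (fun j : IP => (((if j.2 = 0 then 1 else 2) * ρ j.1 : ℤ) : ℚ))) :
    Plat.mkQ (eL (lineList i)) ∈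
      Submodule.span ℤ {Plat.mkQ p1, Plat.mkQ p2, Plat.mkQ p3} := by
  have hmem : eL (lineList i) - (a • p1 + b • p2 + c • p3) ∈ Plat := by
    rw [hEq]
    refine Submodule.add_mem _ (Submodule.add_mem _ (Submodule.add_mem _
      (Submodule.smul_mem _ _ (diff_mem_Plat 0 1 (by decide)))
      (Submodule.smul_mem _ _ (diff_mem_Plat 0 2 (by decide))))
      (Submodule.smul_mem _ _ (diff_mem_Plat 3 4 (by decide)))) ?_
    exact Rlat_le_Plat (Zint_le_Rlat (intVec_mem_Zint
      (fun j => (if j.2 = 0 then 1 else 2) * ρ j.1)))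
  have heq2 : Plat.mkQ (eL (lineList i)) = Plat.mkQ (a • p1 + b • p2 + c • p3) := by
    rw [Submodule.mkQ_apply, Submodule.mkQ_apply, Submodule.Quotient.eq]
    exact hmem
  rw [heq2, map_add, map_add, map_smul, map_smul, map_smul]
  refine Submodule.add_mem _ (Submodule.add_mem _ ?_ ?_) ?_
  · exact Submodule.smul_mem _ _ (Submodule.subset_span (by simp))
  · exact Submodule.smul_mem _ _ (Submodule.subset_span (by simp))
  · exact Submodule.smul_mem _ _ (Submodule.subset_span (by simp))
lemma class0 : Plat.mkQ (eL (lineList 0)) ∈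
    Submodule.span ℤ {Plat.mkQ p1, Plat.mkQ p2, Plat.mkQ p3} := by
  apply class_decomp 0 1 2 2 0 0 0 (fun t => if t = (0,0) then (-3) else if t = (0,1) then (-1) else if t = (0,2) then (-1) else if t = (1,0) then (-1) else if t = (1,1) then (-1) else if t = (1,2) then (0) else if t = (2,0) then (-1) else if t = (2,1) then (0) else if t = (2,2) then (-1) else 0)
  funext j
  rcases j with ⟨t, k⟩
  fin_cases t <;> fin_cases k <;>
    simp (config := { decide := true }) [Pi.sub_apply, Pi.add_apply, Pi.smul_apply,
      p1, p2, p3, L12, L34, L00, eL_apply', zsmul_eq_mul] <;>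
    norm_num

lemma class1 : Plat.mkQ (eL (lineList 1)) ∈
    Submodule.span ℤ {Plat.mkQ p1, Plat.mkQ p2, Plat.mkQ p3} := by
  apply class_decomp 1 1 2 2 2 0 0 (fun t => if t = (0,0) then (-4) else if t = (0,1) then (-2) else if t = (0,2) then (-2) else if t = (1,0) then (0) else if t = (1,1) then (0) else if t = (1,2) then (1) else if t = (2,0) then (-1) else if t = (2,1) then (0) else if t = (2,2) then (-1) else 0)
  funext j
  rcases j with ⟨t, k⟩
  fin_cases t <;> fin_cases k <;>
    simp (config := { decide := true }) [Pi.sub_apply, Pi.add_apply, Pi.smul_apply,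
      p1, p2, p3, L12, L34, L00, eL_apply', zsmul_eq_mul] <;>
    norm_num

lemma class2 : Plat.mkQ (eL (lineList 2)) ∈
    Submodule.span ℤ {Plat.mkQ p1, Plat.mkQ p2, Plat.mkQ p3} := by
  apply class_decomp 2 1 2 2 0 2 0 (fun t => if t = (0,0) then (-4) else if t = (0,1) then (-2) else if t = (0,2) then (-2) else if t = (1,0) then (-1) else if t = (1,1) then (-1) else if t = (1,2) then (0) else if t = (2,0) then (0) else if t = (2,1) then (1) else if t = (2,2) then (0) else 0)
  funext j
  rcases j with ⟨t, k⟩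
  fin_cases t <;> fin_cases k <;>
    simp (config := { decide := true }) [Pi.sub_apply, Pi.add_apply, Pi.smul_apply,
      p1, p2, p3, L12, L34, L00, eL_apply', zsmul_eq_mul] <;>
    norm_num

lemma class3 : Plat.mkQ (eL (lineList 3)) ∈
    Submodule.span ℤ {Plat.mkQ p1, Plat.mkQ p2, Plat.mkQ p3} := by
  apply class_decomp 3 2 2 1 0 0 0 (fun t => if t = (0,0) then (-3) else if t = (0,1) then (-1) else if t = (0,2) then (-1) else if t = (1,0) then (-1) else if t = (1,1) then (-1) else if t = (1,2) then (0) else if t = (2,0) then (-1) else if t = (2,1) then (0) else if t = (2,2) then (-1) else 0)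
  funext j
  rcases j with ⟨t, k⟩
  fin_cases t <;> fin_cases k <;>
    simp (config := { decide := true }) [Pi.sub_apply, Pi.add_apply, Pi.smul_apply,
      p1, p2, p3, L12, L34, L00, eL_apply', zsmul_eq_mul] <;>
    norm_num

lemma class4 : Plat.mkQ (eL (lineList 4)) ∈
    Submodule.span ℤ {Plat.mkQ p1, Plat.mkQ p2, Plat.mkQ p3} := by
  apply class_decomp 4 2 2 1 0 0 2 (fun t => if t = (0,0) then (-4) else if t = (0,1) then (0) else if t = (0,2) then (-1) else if t = (1,0) then (-2) else if t = (1,1) then (0) else if t = (1,2) then (0) else if t = (2,0) then (-2) else if t = (2,1) then (1) else if t = (2,2) then (-1) else 0)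
  funext j
  rcases j with ⟨t, k⟩
  fin_cases t <;> fin_cases k <;>
    simp (config := { decide := true }) [Pi.sub_apply, Pi.add_apply, Pi.smul_apply,
      p1, p2, p3, L12, L34, L00, eL_apply', zsmul_eq_mul] <;>
    norm_num

lemma class5 : Plat.mkQ (eL (lineList 5)) ∈
    Submodule.span ℤ {Plat.mkQ p1, Plat.mkQ p2, Plat.mkQ p3} := by
  apply class_decomp 5 2 2 1 2 2 1 (fun t => if t = (0,0) then (-5) else if t = (0,1) then (-2) else if t = (0,2) then (-2) else if t = (1,0) then (-1) else if t = (1,1) then (0) else if t = (1,2) then (1) else if t = (2,0) then (-1) else if t = (2,1) then (1) else if t = (2,2) then (0) else 0)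
  funext j
  rcases j with ⟨t, k⟩
  fin_cases t <;> fin_cases k <;>
    simp (config := { decide := true }) [Pi.sub_apply, Pi.add_apply, Pi.smul_apply,
      p1, p2, p3, L12, L34, L00, eL_apply', zsmul_eq_mul] <;>
    norm_num

lemma class6 : Plat.mkQ (eL (lineList 6)) ∈
    Submodule.span ℤ {Plat.mkQ p1, Plat.mkQ p2, Plat.mkQ p3} := by
  apply class_decomp 6 2 1 2 0 0 0 (fun t => if t = (0,0) then (-3) else if t = (0,1) then (-1) else if t = (0,2) then (-1) else if t = (1,0) then (-1) else if t = (1,1) then (-1) else if t = (1,2) then (0) else if t = (2,0) then (-1) else if t = (2,1) then (0) else if t = (2,2) then (-1) else 0)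
  funext j
  rcases j with ⟨t, k⟩
  fin_cases t <;> fin_cases k <;>
    simp (config := { decide := true }) [Pi.sub_apply, Pi.add_apply, Pi.smul_apply,
      p1, p2, p3, L12, L34, L00, eL_apply', zsmul_eq_mul] <;>
    norm_num

lemma class7 : Plat.mkQ (eL (lineList 7)) ∈
    Submodule.span ℤ {Plat.mkQ p1, Plat.mkQ p2, Plat.mkQ p3} := by
  apply class_decomp 7 2 1 2 2 1 2 (fun t => if t = (0,0) then (-5) else if t = (0,1) then (-1) else if t = (0,2) then (-2) else if t = (1,0) then (-1) else if t = (1,1) then (0) else if t = (1,2) then (1) else if t = (2,0) then (-1) else if t = (2,1) then (1) else if t = (2,2) then (-1) else 0)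
  funext j
  rcases j with ⟨t, k⟩
  fin_cases t <;> fin_cases k <;>
    simp (config := { decide := true }) [Pi.sub_apply, Pi.add_apply, Pi.smul_apply,
      p1, p2, p3, L12, L34, L00, eL_apply', zsmul_eq_mul] <;>
    norm_num

lemma class8 : Plat.mkQ (eL (lineList 8)) ∈
    Submodule.span ℤ {Plat.mkQ p1, Plat.mkQ p2, Plat.mkQ p3} := by
  apply class_decomp 8 2 1 2 0 1 1 (fun t => if t = (0,0) then (-4) else if t = (0,1) then (-1) else if t = (0,2) then (-1) else if t = (1,0) then (-1) else if t = (1,1) then (-1) else if t = (1,2) then (0) else if t = (2,0) then (-1) else if t = (2,1) then (1) else if t = (2,2) then (-1) else 0)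
  funext j
  rcases j with ⟨t, k⟩
  fin_cases t <;> fin_cases k <;>
    simp (config := { decide := true }) [Pi.sub_apply, Pi.add_apply, Pi.smul_apply,
      p1, p2, p3, L12, L34, L00, eL_apply', zsmul_eq_mul] <;>
    norm_num

lemma class9 : Plat.mkQ (eL (lineList 9)) ∈
    Submodule.span ℤ {Plat.mkQ p1, Plat.mkQ p2, Plat.mkQ p3} := by
  apply class_decomp 9 1 1 1 2 2 0 (fun t => if t = (0,0) then (-3) else if t = (0,1) then (-2) else if t = (0,2) then (-2) else if t = (1,0) then (0) else if t = (1,1) then (0) else if t = (1,2) then (1) else if t = (2,0) then (0) else if t = (2,1) then (1) else if t = (2,2) then (0) else 0)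
  funext j
  rcases j with ⟨t, k⟩
  fin_cases t <;> fin_cases k <;>
    simp (config := { decide := true }) [Pi.sub_apply, Pi.add_apply, Pi.smul_apply,
      p1, p2, p3, L12, L34, L00, eL_apply', zsmul_eq_mul] <;>
    norm_num

lemma class10 : Plat.mkQ (eL (lineList 10)) ∈
    Submodule.span ℤ {Plat.mkQ p1, Plat.mkQ p2, Plat.mkQ p3} := by
  apply class_decomp 10 1 1 1 0 1 2 (fun t => if t = (0,0) then (-3) else if t = (0,1) then (0) else if t = (0,2) then (-1) else if t = (1,0) then (-1) else if t = (1,1) then (0) else if t = (1,2) then (0) else if t = (2,0) then (-1) else if t = (2,1) then (1) else if t = (2,2) then (0) else 0)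
  funext j
  rcases j with ⟨t, k⟩
  fin_cases t <;> fin_cases k <;>
    simp (config := { decide := true }) [Pi.sub_apply, Pi.add_apply, Pi.smul_apply,
      p1, p2, p3, L12, L34, L00, eL_apply', zsmul_eq_mul] <;>
    norm_num

lemma class11 : Plat.mkQ (eL (lineList 11)) ∈
    Submodule.span ℤ {Plat.mkQ p1, Plat.mkQ p2, Plat.mkQ p3} := by
  apply class_decomp 11 1 1 1 0 2 1 (fun t => if t = (0,0) then (-3) else if t = (0,1) then (-1) else if t = (0,2) then (-1) else if t = (1,0) then (-1) else if t = (1,1) then (0) else if t = (1,2) then (0) else if t = (2,0) then (0) else if t = (2,1) then (1) else if t = (2,2) then (0) else 0)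
  funext j
  rcases j with ⟨t, k⟩
  fin_cases t <;> fin_cases k <;>
    simp (config := { decide := true }) [Pi.sub_apply, Pi.add_apply, Pi.smul_apply,
      p1, p2, p3, L12, L34, L00, eL_apply', zsmul_eq_mul] <;>
    norm_num

/-! ### Part (ii): the discriminant group -/

lemma L12_line : IsLine L12 := ⟨(0,0), (0,1), by decide, rfl⟩
lemma L34_line : IsLine L34 := ⟨(0,0), (1,0), by decide, rfl⟩
lemma L00_line : IsLine L00 := ⟨(0,0), (1,1), by decide, rfl⟩

lemma eL_mem_Qlat' {L : Finset F3} (hL : IsLine L) : eL L ∈ Qlat :=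
  Submodule.subset_span (Or.inr ⟨L, hL, rfl⟩)

lemma p1_mem_Qlat : p1 ∈ Qlat :=
  Submodule.add_mem _ (eL_mem_Qlat' L34_line) (eL_mem_Qlat' L00_line)
lemma p2_mem_Qlat : p2 ∈ Qlat :=
  Submodule.add_mem _ (eL_mem_Qlat' L12_line) (eL_mem_Qlat' L34_line)
lemma p3_mem_Qlat : p3 ∈ Qlat :=
  Submodule.add_mem _ (eL_mem_Qlat' L12_line) (eL_mem_Qlat' L00_line)

lemma hmap : Submodule.map Plat.mkQ (dualP Plat)
    = Submodule.span ℤ {Plat.mkQ p1, Plat.mkQ p2, Plat.mkQ p3} := by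
  have key : ∀ i : Fin 12, Plat.mkQ (eL (lineList i)) ∈
      Submodule.span ℤ {Plat.mkQ p1, Plat.mkQ p2, Plat.mkQ p3} := by
    intro i; fin_cases i
    exacts [class0, class1, class2, class3, class4, class5, class6, class7, class8,
      class9, class10, class11]
  rw [dual_eq_Qlat, Qlat, Submodule.map_span]
  apply le_antisymm
  · rw [Submodule.span_le]
    rintro _ ⟨x, hx, rfl⟩
    rcases hx with ⟨t, k, rfl⟩ | ⟨L, ⟨p, d, hd, rfl⟩, rfl⟩
    · have hz : Plat.mkQ (Ev t k) = 0 := by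
        rw [Submodule.mkQ_apply, Submodule.Quotient.mk_eq_zero]
        exact Ev_mem_Plat t k
      rw [hz]; exact Submodule.zero_mem _
    · obtain ⟨kk, hk⟩ := line_canon d hd
      obtain ⟨a, ha⟩ := line_idx p kk
      rw [hk p, ha]
      exact key _
  · rw [Submodule.span_le]
    have himg : ∀ y ∈ Qlat, Plat.mkQ y ∈ Submodule.span ℤ (⇑Plat.mkQ '' Qgen) := by
      intro y hy
      have : Plat.mkQ y ∈ Submodule.map Plat.mkQ Qlat := Submodule.mem_map_of_mem hy
      rwa [Qlat, Submodule.map_span] at this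
    rintro x hx
    simp only [Set.mem_insert_iff, Set.mem_singleton_iff] at hx
    rcases hx with rfl | rfl | rfl
    · exact himg _ p1_mem_Qlat
    · exact himg _ p2_mem_Qlat
    · exact himg _ p3_mem_Qlat

lemma three_eL (L : Finset F3) : (3:ℤ) • eL L ∈ Zint := by
  intro j
  refine ⟨if j.1 ∈ L then (if j.2 = 0 then 1 else 2) else 0, ?_⟩
  rw [Pi.smul_apply, zsmul_eq_mul, eL_apply']
  push_cast
  split_ifs <;> norm_num

lemma three_p_mem (x y : Finset F3) : (3:ℤ) • (eL x + eL y) ∈ Plat := by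
  rw [smul_add]
  exact Submodule.add_mem _ (Rlat_le_Plat (Zint_le_Rlat (three_eL x)))
    (Rlat_le_Plat (Zint_le_Rlat (three_eL y)))

lemma three_q1 : (zmultiplesHom _ (Plat.mkQ p1)) (3:ℤ) = 0 := by
  simp only [zmultiplesHom_apply, ← map_zsmul]
  rw [Submodule.mkQ_apply, Submodule.Quotient.mk_eq_zero]
  exact three_p_mem L34 L00
lemma three_q2 : (zmultiplesHom _ (Plat.mkQ p2)) (3:ℤ) = 0 := by
  simp only [zmultiplesHom_apply, ← map_zsmul]
  rw [Submodule.mkQ_apply, Submodule.Quotient.mk_eq_zero]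
  exact three_p_mem L12 L34
lemma three_q3 : (zmultiplesHom _ (Plat.mkQ p3)) (3:ℤ) = 0 := by
  simp only [zmultiplesHom_apply, ← map_zsmul]
  rw [Submodule.mkQ_apply, Submodule.Quotient.mk_eq_zero]
  exact three_p_mem L12 L00

noncomputable def f1 : ZMod 3 →+ VP ⧸ Plat := ZMod.lift 3 ⟨zmultiplesHom _ (Plat.mkQ p1), three_q1⟩
noncomputable def f2 : ZMod 3 →+ VP ⧸ Plat := ZMod.lift 3 ⟨zmultiplesHom _ (Plat.mkQ p2), three_q2⟩
noncomputable def f3 : ZMod 3 →+ VP ⧸ Plat := ZMod.lift 3 ⟨zmultiplesHom _ (Plat.mkQ p3), three_q3⟩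

noncomputable def ψ : ZMod 3 × ZMod 3 × ZMod 3 →+ VP ⧸ Plat :=
  AddMonoidHom.mk' (fun c => f1 c.1 + f2 c.2.1 + f3 c.2.2) (by
    rintro ⟨a1, a2, a3⟩ ⟨b1, b2, b3⟩
    simp only [Prod.fst_add, Prod.snd_add, map_add]
    abel)

lemma ψ_int (a b c : ℤ) :
    ψ ((a : ZMod 3), (b : ZMod 3), (c : ZMod 3)) = Plat.mkQ (a • p1 + b • p2 + c • p3) := by
  show f1 _ + f2 _ + f3 _ = _
  rw [f1, f2, f3, ZMod.lift_coe, ZMod.lift_coe, ZMod.lift_coe]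
  simp only [zmultiplesHom_apply, map_add, map_zsmul]

lemma inj_core (a b c : ℤ) (h : a • p1 + b • p2 + c • p3 ∈ Plat) :
    (a : ZMod 3) = 0 ∧ (b : ZMod 3) = 0 ∧ (c : ZMod 3) = 0 := by
  have core : ∀ (g : VP), g ∈ dualP Plat →
      ∀ (ga gb gc : ℚ), BP g p1 = ga → BP g p2 = gb → BP g p3 = gc →
      ∃ n : ℤ, (ga * a + gb * b + gc * c) = n := by
    intro g hg ga gb gc h1 h2 h3
    obtain ⟨n, hn⟩ := hg _ h
    rw [BP_add_right, BP_add_right, BP_zsmul_right, BP_zsmul_right, BP_zsmul_right,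
      h1, h2, h3] at hn
    exact ⟨n, by linear_combination hn⟩
  refine ⟨?_, ?_, ?_⟩
  · obtain ⟨n, hn⟩ := core p1 (Qlat_le_dual p1_mem_Qlat) _ _ _ G11 G12 G13
    have hi : (-16) * a = 3 * (n + 4*b + 4*c) := by
      have hq : (((-16) * a : ℤ) : ℚ) = ((3 * (n + 4*b + 4*c) : ℤ) : ℚ) := by
        push_cast
        linear_combination 3 * hn
      exact_mod_cast hq
    have hdvd : (3:ℤ) ∣ a := by omega
    rw [ZMod.intCast_zmod_eq_zero_iff_dvd]
    exact_mod_cast hdvd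
  · obtain ⟨n, hn⟩ := core p2 (Qlat_le_dual p2_mem_Qlat) _ _ _ G21 G22 G23
    have hi : (-16) * b = 3 * (n + 4*a + 4*c) := by
      have hq : (((-16) * b : ℤ) : ℚ) = ((3 * (n + 4*a + 4*c) : ℤ) : ℚ) := by
        push_cast
        linear_combination 3 * hn
      exact_mod_cast hq
    have hdvd : (3:ℤ) ∣ b := by omega
    rw [ZMod.intCast_zmod_eq_zero_iff_dvd]
    exact_mod_cast hdvd
  · obtain ⟨n, hn⟩ := core p3 (Qlat_le_dual p3_mem_Qlat) _ _ _ G31 G32 G33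
    have hi : (-16) * c = 3 * (n + 4*a + 4*b) := by
      have hq : (((-16) * c : ℤ) : ℚ) = ((3 * (n + 4*a + 4*b) : ℤ) : ℚ) := by
        push_cast
        linear_combination 3 * hn
      exact_mod_cast hq
    have hdvd : (3:ℤ) ∣ c := by omega
    rw [ZMod.intCast_zmod_eq_zero_iff_dvd]
    exact_mod_cast hdvd

noncomputable def Tspan : Submodule ℤ (VP ⧸ Plat) :=
  Submodule.span ℤ {Plat.mkQ p1, Plat.mkQ p2, Plat.mkQ p3}

lemma ψ_mem (c : ZMod 3 × ZMod 3 × ZMod 3) : ψ c ∈ Tspan := by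
  rcases c with ⟨x, y, z⟩
  obtain ⟨a, rfl⟩ := ZMod.intCast_surjective x
  obtain ⟨b, rfl⟩ := ZMod.intCast_surjective y
  obtain ⟨cc, rfl⟩ := ZMod.intCast_surjective z
  rw [ψ_int, map_add, map_add, map_zsmul, map_zsmul, map_zsmul]
  refine Submodule.add_mem _ (Submodule.add_mem _ ?_ ?_) ?_ <;>
    exact Submodule.smul_mem _ _ (Submodule.subset_span (by simp))

noncomputable def ψ' : ZMod 3 × ZMod 3 × ZMod 3 →+ Tspan :=
  ψ.codRestrict _ ψ_mem

lemma ψ'_bij : Function.Bijective ψ' := by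
  constructor
  · rw [injective_iff_map_eq_zero]
    rintro ⟨x, y, z⟩ h
    obtain ⟨a, rfl⟩ := ZMod.intCast_surjective x
    obtain ⟨b, rfl⟩ := ZMod.intCast_surjective y
    obtain ⟨cc, rfl⟩ := ZMod.intCast_surjective z
    have h0 : ψ ((a : ZMod 3), (b : ZMod 3), (cc : ZMod 3)) = 0 := by
      have := congrArg (Subtype.val) h
      exact this
    rw [ψ_int, Submodule.mkQ_apply, Submodule.Quotient.mk_eq_zero] at h0
    obtain ⟨e1, e2, e3⟩ := inj_core a b cc h0
    simp [Prod.ext_iff, e1, e2, e3]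
  · rintro ⟨x, hx⟩
    rw [Tspan] at hx
    obtain ⟨a, z, hz, rfl⟩ := Submodule.mem_span_insert.1 hx
    obtain ⟨b, z', hz', rfl⟩ := Submodule.mem_span_insert.1 hz
    obtain ⟨c, rfl⟩ := Submodule.mem_span_singleton.1 hz'
    refine ⟨((a : ZMod 3), (b : ZMod 3), (c : ZMod 3)), ?_⟩
    apply Subtype.ext
    show ψ _ = _
    rw [ψ_int, map_add, map_add, map_zsmul, map_zsmul, map_zsmul, add_assoc]

noncomputable def discEquiv : (Tspan ≃+ (ZMod 3 × ZMod 3 × ZMod 3)) :=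
  (AddEquiv.ofBijective ψ' ψ'_bij).symm

theorem statement2 :
    -- (i) P* is generated by R together with the vectors e(L') over affine lines L'
    (dualP Plat = Submodule.span ℤ (Rgen ∪ {x | ∃ L, IsLine L ∧ x = eL L})) ∧
    -- (ii) the discriminant group P*/P is generated by p₁+P, p₂+P, p₃+P ...
    (Submodule.map Plat.mkQ (dualP Plat) =
      Submodule.span ℤ {Plat.mkQ p1, Plat.mkQ p2, Plat.mkQ p3}) ∧
    -- ... and is isomorphic to (ℤ/3)³
    Nonempty ((Submodule.map Plat.mkQ (dualP Plat)) ≃+ (ZMod 3 × ZMod 3 × ZMod 3)) ∧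
    -- (iii) the bilinear form on the discriminant group is diagonal w.r.t. these generators
    (∀ i j : Fin 3, i ≠ j → ∃ n : ℤ, BP (pv i) (pv j) = n) ∧
    -- ... and q_P(p_j + P) = 2/3 mod 2ℤ
    (∀ j : Fin 3, ∃ n : ℤ, BP (pv j) (pv j) = 2 / 3 + 2 * n) := by
  have hiso : Nonempty ((Submodule.map Plat.mkQ (dualP Plat)) ≃+ (ZMod 3 × ZMod 3 × ZMod 3)) := by
    rw [hmap]; exact ⟨discEquiv⟩
  refine ⟨dual_eq_Qlat, hmap, hiso, ?_, ?_⟩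
  · intro i j hij
    fin_cases i <;> fin_cases j
    · exact absurd rfl hij
    · exact ⟨-4, by show BP p1 p2 = ((-4:ℤ):ℚ); rw [G12]; norm_num⟩
    · exact ⟨-4, by show BP p1 p3 = ((-4:ℤ):ℚ); rw [G13]; norm_num⟩
    · exact ⟨-4, by show BP p2 p1 = ((-4:ℤ):ℚ); rw [G21]; norm_num⟩
    · exact absurd rfl hij
    · exact ⟨-4, by show BP p2 p3 = ((-4:ℤ):ℚ); rw [G23]; norm_num⟩
    · exact ⟨-4, by show BP p3 p1 = ((-4:ℤ):ℚ); rw [G31]; norm_num⟩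
    · exact ⟨-4, by show BP p3 p2 = ((-4:ℤ):ℚ); rw [G32]; norm_num⟩
    · exact absurd rfl hij
  · intro j
    fin_cases j
    · exact ⟨-3, by show BP p1 p1 = 2/3 + 2*((-3:ℤ):ℚ); rw [G11]; norm_num⟩
    · exact ⟨-3, by show BP p2 p2 = 2/3 + 2*((-3:ℤ):ℚ); rw [G22]; norm_num⟩
    · exact ⟨-3, by show BP p3 p3 = 2/3 + 2*((-3:ℤ):ℚ); rw [G33]; norm_num⟩
end
end
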